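/- arXiv:patt-sol/9801003 — 2 statements merged into one kernel-verified Lean document; each statement's English description precedes it below -/
import Mathlib

section
/- Representation formula for the profile derivative: let η̃ : ℝ → (−1/√3, 1/√3) be twice continuously differentiable and satisfy (d²/dξ²)[A(η̃(ξ))] + (ξ/2)·η̃′(ξ) = 0 for all ξ ∈ ℝ. Then for every ξ₀, ξ ∈ ℝ one has η̃′(ξ) = [a(η̃(ξ₀))·η̃′(ξ₀) / a(η̃(ξ))] · exp(−∫_{ξ₀}^{ξ} y/(2·a(η̃(y))) dy). In particular, if η̃′(ξ₀) = 0 for some ξ₀ then η̃ is constant. -/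
/-!
The flux `g = a(η̃) η̃' = (A ∘ η̃)'` satisfies the first-order linear equation
`g' = -(ξ/2) η̃' = -(ξ / (2 a(η̃))) g`, since `a(η̃) > 0` on the range of `η̃`. Integrating
this equation gives `g(ξ) = g(ξ₀) exp (-∫_{ξ₀}^{ξ} y / (2 a(η̃ y)) dy)`, and dividing by
`a(η̃ ξ)` gives the formula. In particular `η̃'` vanishes identically once it vanishes at one point.
-/

noncomputable section

open Real Filter MeasureTheory Set

/-- The coefficient `a(η) = (1 - 3η²)/(1 - η²)`. -/
def aGL (η : ℝ) : ℝ := (1 - 3 * η ^ 2) / (1 - η ^ 2)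

/-- The primitive `A(η) = ∫₀^η a(s) ds`. -/
def AGL (η : ℝ) : ℝ := ∫ s in (0:ℝ)..η, aGL s

/-- A mixing profile for boundary values `ηp` (at `+∞`) and `ηm` (at `-∞`). -/
def IsMixingProfile (ηp ηm : ℝ) (e : ℝ → ℝ) : Prop :=
  ContDiff ℝ 2 e ∧
  (∀ ξ, e ξ ∈ Set.Ioo (-(1 / Real.sqrt 3)) (1 / Real.sqrt 3)) ∧
  (∀ ξ, deriv (deriv (fun x => AGL (e x))) ξ + ξ / 2 * deriv e ξ = 0) ∧
  Filter.Tendsto e Filter.atTop (nhds ηp) ∧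
  Filter.Tendsto e Filter.atBot (nhds ηm)

theorem eq_mul_exp_neg_integral_of_hasDerivAt {g b : ℝ → ℝ} (hb : Continuous b)
    (hg : ∀ x, HasDerivAt g (-(b x * g x)) x) (x₀ x : ℝ) :
    g x = g x₀ * exp (-∫ y in x₀..x, b y) := by
  set B : ℝ → ℝ := fun x => ∫ y in x₀..x, b y
  have hB : ∀ x, HasDerivAt B (b x) x := fun x =>
    intervalIntegral.integral_hasDerivAt_right (hb.intervalIntegrable _ _)
      hb.aestronglyMeasurable.stronglyMeasurableAtFilter hb.continuousAt
  have hconst : ∀ x, HasDerivAt (fun x => g x * exp (B x)) 0 x := by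
    intro x
    have h := (hg x).mul (hB x).exp
    rwa [show -(b x * g x) * exp (B x) + g x * (exp (B x) * b x) = 0 by ring] at h
  have key := is_const_of_deriv_eq_zero (fun x => (hconst x).differentiableAt)
    (fun x => (hconst x).deriv) x x₀
  simp only [B, intervalIntegral.integral_same, exp_zero, mul_one] at key
  rw [exp_neg, ← key, mul_inv_cancel_right₀ (exp_pos _).ne']

theorem aGL_pos {x : ℝ} (hx : x ^ 2 < 1 / 3) : 0 < aGL x :=
  div_pos (by linarith) (by linarith)

theorem sq_lt_one_third_of_mem_Ioo {x : ℝ} (hx : x ∈ Ioo (-(1 / √3)) (1 / √3)) :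
    x ^ 2 < 1 / 3 := by
  have h := sq_lt_sq' hx.1 hx.2
  rwa [div_pow, one_pow, sq_sqrt (by norm_num)] at h

theorem differentiableAt_aGL {x : ℝ} (hx : x ^ 2 < 1) : DifferentiableAt ℝ aGL x :=
  (by fun_prop : DifferentiableAt ℝ (fun x : ℝ => 1 - 3 * x ^ 2) x).div (by fun_prop)
    (by linarith)

theorem hasDerivAt_AGL {x : ℝ} (hx : x ^ 2 < 1) : HasDerivAt AGL (aGL x) x := by
  have hint : IntervalIntegrable aGL volume 0 x := by
    refine ContinuousOn.intervalIntegrable fun y hy => ?_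
    have hy' : y ^ 2 < 1 := by
      rw [mem_uIcc] at hy
      rcases hy with ⟨h₁, h₂⟩ | ⟨h₁, h₂⟩ <;> nlinarith
    exact (differentiableAt_aGL hy').continuousAt.continuousWithinAt
  have hmeas : Measurable aGL := by
    unfold aGL
    fun_prop
  exact intervalIntegral.integral_hasDerivAt_right hint
    hmeas.aestronglyMeasurable.stronglyMeasurableAtFilter (differentiableAt_aGL hx).continuousAt

section Profile

variable {e : ℝ → ℝ} (hreg : ContDiff ℝ 2 e)
  (hrange : ∀ ξ, e ξ ∈ Ioo (-(1 / √3)) (1 / √3))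
include hreg hrange

theorem differentiable_aGL_comp : Differentiable ℝ fun ξ => aGL (e ξ) := fun ξ =>
  (differentiableAt_aGL (by linarith [sq_lt_one_third_of_mem_Ioo (hrange ξ)])).comp ξ
    (hreg.differentiable (by norm_num) ξ)

theorem hasDerivAt_AGL_comp (ξ : ℝ) :
    HasDerivAt (fun x => AGL (e x)) (aGL (e ξ) * deriv e ξ) ξ :=
  (hasDerivAt_AGL (by linarith [sq_lt_one_third_of_mem_Ioo (hrange ξ)])).comp ξ
    (hreg.differentiable (by norm_num) ξ).hasDerivAt

theorem hasDerivAt_aGL_comp_mul_deriv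
    (hode : ∀ ξ, deriv (deriv (fun x => AGL (e x))) ξ + ξ / 2 * deriv e ξ = 0) (ξ : ℝ) :
    HasDerivAt (fun x => aGL (e x) * deriv e x) (-(ξ / 2 * deriv e ξ)) ξ := by
  have hflux : deriv (fun x => AGL (e x)) = fun x => aGL (e x) * deriv e x :=
    funext fun x => (hasDerivAt_AGL_comp hreg hrange x).deriv
  have hderiv2 : Differentiable ℝ (deriv e) :=
    (hreg.iterate_deriv' 1 1).differentiable (by norm_num)
  have hdiff : DifferentiableAt ℝ (fun x => aGL (e x) * deriv e x) ξ :=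
    (differentiable_aGL_comp hreg hrange ξ).mul (hderiv2 ξ)
  refine hdiff.hasDerivAt.congr_deriv ?_
  rw [← hflux]
  linarith [hode ξ]

end Profile

/-- Representation formula for the derivative of a solution of the profile ODE,
and the resulting rigidity: if the derivative vanishes somewhere, the solution
is constant. -/
theorem profile_deriv_representation
    (e : ℝ → ℝ) (hreg : ContDiff ℝ 2 e)
    (hrange : ∀ ξ, e ξ ∈ Set.Ioo (-(1 / Real.sqrt 3)) (1 / Real.sqrt 3))
    (hode : ∀ ξ, deriv (deriv (fun x => AGL (e x))) ξ + ξ / 2 * deriv e ξ = 0) :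
    (∀ ξ₀ ξ : ℝ,
      deriv e ξ = aGL (e ξ₀) * deriv e ξ₀ / aGL (e ξ) *
        Real.exp (-∫ y in ξ₀..ξ, y / (2 * aGL (e y)))) ∧
    (∀ ξ₀ : ℝ, deriv e ξ₀ = 0 → ∀ ξ : ℝ, e ξ = e ξ₀) := by
  have hpos : ∀ ξ, 0 < aGL (e ξ) := fun ξ => aGL_pos (sq_lt_one_third_of_mem_Ioo (hrange ξ))
  have hcoeff : Continuous fun y => y / (2 * aGL (e y)) :=
    continuous_id.div (continuous_const.mul (differentiable_aGL_comp hreg hrange).continuous)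
      fun y => mul_ne_zero two_ne_zero (hpos y).ne'
  have hlinear : ∀ ξ, HasDerivAt (fun x => aGL (e x) * deriv e x)
      (-(ξ / (2 * aGL (e ξ)) * (aGL (e ξ) * deriv e ξ))) ξ := by
    intro ξ
    convert hasDerivAt_aGL_comp_mul_deriv hreg hrange hode ξ using 1
    field_simp [(hpos ξ).ne']
  have formula : ∀ ξ₀ ξ : ℝ, deriv e ξ = aGL (e ξ₀) * deriv e ξ₀ / aGL (e ξ) *
      exp (-∫ y in ξ₀..ξ, y / (2 * aGL (e y))) := by
    intro ξ₀ ξ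
    rw [div_mul_eq_mul_div, eq_div_iff (hpos ξ).ne', mul_comm (deriv e ξ)]
    exact eq_mul_exp_neg_integral_of_hasDerivAt hcoeff hlinear ξ₀ ξ
  refine ⟨formula, fun ξ₀ h₀ ξ => ?_⟩
  have hzero : ∀ x, deriv e x = 0 := fun x => by simp [formula ξ₀ x, h₀]
  exact is_const_of_deriv_eq_zero (hreg.differentiable (by norm_num)) hzero ξ ξ₀
end
end

section
/- Local convergence to a rotating periodic wave (Corollary 4.3): let η₊, η₋ ∈ (−1/√3, 1/√3) with η₊ ≠ η₋, let η̃ be the mixing profile, Ñ(ξ) = η₋ξ + ∫_{−∞}^ξ [η̃(s) − η₋] ds, Ũ(t,x) = √(1 − η̃(x/√t)²)·exp(i·√t·Ñ(x/√t)) for t > 0, η* = η̃(0), and φ* = Ñ(0). Let t₀ > 0, ν ∈ (0, 1), and suppose u : [0,∞) × ℝ → ℂ satisfies sup_{x ∈ ℝ} |u(t,x) − Ũ(t₀+t, x)| ≤ C₀·t^{−ν/4} for all t ≥ 1 and some C₀ > 0. Then for every x₀ > 0 there exists C > 0 such that for all t ≥ 1: sup_{|x| ≤ x₀} |u(t,x)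 − √(1 − η*²)·exp(i·(√t·φ* + η*·x))| ≤ C·t^{−ν/4}. -/
noncomputable section

open Real Filter MeasureTheory Set

/-- The antiderivative `Ñ(ξ) = η₋ ξ + ∫_{-∞}^ξ (η̃(s) - η₋) ds`. -/
def NGL (e : ℝ → ℝ) (ηm : ℝ) (ξ : ℝ) : ℝ :=
  ηm * ξ + ∫ s in Set.Iic ξ, (e s - ηm)

/-- The mixing profile solution
`Ũ(t,x) = √(1 - η̃(x/√t)²) exp(i √t Ñ(x/√t))`. -/
def Utilde (e : ℝ → ℝ) (ηm : ℝ) (t x : ℝ) : ℂ :=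
  ((Real.sqrt (1 - e (x / Real.sqrt t) ^ 2) : ℝ) : ℂ)
    * Complex.exp (Complex.I
        * ((Real.sqrt t * NGL e ηm (x / Real.sqrt t) : ℝ) : ℂ))

/-!
Write `v = a(η̃) η̃' = (A ∘ η̃)'`. The profile equation says `v' = -(ξ/2) η̃' = c v` with
`c = -ξ / (2 a(η̃))`, and `0 < a ≤ 1` on `(-1/√3, 1/√3)` gives `c ≥ -ξ/2` for `ξ ≤ 0`. Hence
`v² e^{ξ²/2}` increases on `(-∞, 0]`, so `v` decays like `e^{-ξ²/4}` at `-∞`; since `a(η̃)` stays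
away from `0` there (because `|η₋| < 1/√3`), so do `η̃'` and `η̃ - η₋`. Thus the integral
defining `Ñ` converges and `Ñ(ξ) = φ* + η* ξ + O(ξ²)` near `0`, while `η̃(ξ) = η* + O(ξ)`.
At `ξ = x/√(t₀+t)` with `|x| ≤ x₀`, the amplitude of `Ũ(t₀+t, x)` is `√(1 - η*²) + O(t^{-1/2})`
and its phase is `√t φ* + η* x + O(t^{-1/2})`; finally `t^{-1/2} ≤ t^{-ν/4}`.
-/

lemma three_mul_sq_lt_one_of_mem_Ioo {y : ℝ}
    (hy : y ∈ Ioo (-(1 / Real.sqrt 3)) (1 / Real.sqrt 3)) : 3 * y ^ 2 < 1 := by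
  have h := sq_lt_sq' hy.1 hy.2
  rw [div_pow, Real.sq_sqrt (by norm_num : (0:ℝ) ≤ 3)] at h
  linarith

lemma mem_Ioo_of_three_mul_sq_lt_one {y : ℝ} (hy : 3 * y ^ 2 < 1) : y ∈ Ioo (-1 : ℝ) 1 :=
  ⟨by nlinarith, by nlinarith⟩

lemma aGL_pos_s19 {y : ℝ} (hy : 3 * y ^ 2 < 1) : 0 < aGL y :=
  div_pos (by linarith) (by nlinarith)

lemma aGL_le_one {y : ℝ} (hy : y ^ 2 < 1) : aGL y ≤ 1 := by
  rw [aGL, div_le_one (by linarith)]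
  nlinarith [sq_nonneg y]

lemma continuousOn_aGL : ContinuousOn aGL (Ioo (-1) 1) :=
  ContinuousOn.div (by fun_prop) (by fun_prop) fun y hy => by nlinarith [hy.1, hy.2]

lemma differentiableAt_aGL_s19 {y : ℝ} (hy : y ∈ Ioo (-1 : ℝ) 1) : DifferentiableAt ℝ aGL y :=
  DifferentiableAt.div (by fun_prop) (by fun_prop) (by nlinarith [hy.1, hy.2])

lemma hasDerivAt_AGL_s19 {y : ℝ} (hy : y ∈ Ioo (-1 : ℝ) 1) : HasDerivAt AGL (aGL y) y :=
  intervalIntegral.integral_hasDerivAt_right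
    (continuousOn_aGL.mono (ordConnected_Ioo.uIcc_subset (by norm_num) hy)).intervalIntegrable
    (continuousOn_aGL.stronglyMeasurableAtFilter isOpen_Ioo _ hy)
    (continuousOn_aGL.continuousAt (isOpen_Ioo.mem_nhds hy))

lemma abs_sqrt_sub_sqrt_le {a b : ℝ} (ha : 0 ≤ a) (hb : 0 < b) :
    |Real.sqrt a - Real.sqrt b| ≤ |a - b| / Real.sqrt b := by
  rw [le_div_iff₀ (Real.sqrt_pos.2 hb)]
  calc |Real.sqrt a - Real.sqrt b| * Real.sqrt b
      ≤ |Real.sqrt a - Real.sqrt b| * (Real.sqrt a + Real.sqrt b) := by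
        gcongr; exact le_add_of_nonneg_left (Real.sqrt_nonneg a)
    _ = |a - b| := by
        rw [← abs_of_nonneg (add_nonneg (Real.sqrt_nonneg a) (Real.sqrt_nonneg b)), ← abs_mul,
          mul_comm, ← sq_sub_sq, Real.sq_sqrt ha, Real.sq_sqrt hb.le]

lemma abs_sqrt_one_sub_sq_sub_le {y z : ℝ} (hy : y ^ 2 < 1) (hz : z ^ 2 < 1) :
    |Real.sqrt (1 - y ^ 2) - Real.sqrt (1 - z ^ 2)| ≤ 2 / Real.sqrt (1 - z ^ 2) * |y - z| := by
  have hyz : |y + z| ≤ 2 := abs_le_of_sq_le_sq (by nlinarith [sq_nonneg (y - z)]) zero_le_two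
  calc |Real.sqrt (1 - y ^ 2) - Real.sqrt (1 - z ^ 2)|
      ≤ |(1 - y ^ 2) - (1 - z ^ 2)| / Real.sqrt (1 - z ^ 2) :=
        abs_sqrt_sub_sqrt_le (by linarith) (by linarith)
    _ = |y + z| * |y - z| / Real.sqrt (1 - z ^ 2) := by
        rw [← abs_mul, ← abs_neg]; ring_nf
    _ ≤ 2 * |y - z| / Real.sqrt (1 - z ^ 2) := by gcongr
    _ = 2 / Real.sqrt (1 - z ^ 2) * |y - z| := by ring

lemma norm_ofReal_mul_exp_sub_le (r₁ r₂ θ₁ θ₂ : ℝ) (hr₂ : |r₂| ≤ 1) :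
    ‖(r₁ : ℂ) * Complex.exp (Complex.I * θ₁) - r₂ * Complex.exp (Complex.I * θ₂)‖
      ≤ |r₁ - r₂| + |θ₁ - θ₂| := by
  have hsplit : (r₁ : ℂ) * Complex.exp (Complex.I * θ₁) - r₂ * Complex.exp (Complex.I * θ₂)
      = ((r₁ - r₂ : ℝ) : ℂ) * Complex.exp (Complex.I * θ₁)
        + r₂ * Complex.exp (Complex.I * θ₂) * (Complex.exp (Complex.I * (θ₁ - θ₂ : ℝ)) - 1) := by
    rw [mul_assoc, mul_sub, ← Complex.exp_add]
    push_cast; ring_nf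
  have hunit (θ : ℝ) : ‖Complex.exp (Complex.I * θ)‖ = 1 := by
    rw [mul_comm]; exact Complex.norm_exp_ofReal_mul_I θ
  calc _ ≤ |r₁ - r₂| + |r₂| * |θ₁ - θ₂| := by
        rw [hsplit]
        refine (norm_add_le _ _).trans ?_
        simp only [norm_mul, hunit, Complex.norm_real, Real.norm_eq_abs, mul_one]
        gcongr
        simpa using Real.norm_exp_I_mul_ofReal_sub_one_le (x := θ₁ - θ₂)
    _ ≤ |r₁ - r₂| + |θ₁ - θ₂| := by
        gcongr; exact mul_le_of_le_one_left (abs_nonneg _) hr₂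

lemma one_div_sqrt_le_rpow {t ν : ℝ} (ht : 1 ≤ t) (hν : ν ≤ 2) :
    1 / Real.sqrt t ≤ t ^ (-(ν / 4)) := by
  rw [Real.sqrt_eq_rpow, one_div, ← Real.rpow_neg (by linarith)]
  exact Real.rpow_le_rpow_of_exponent_le ht (by linarith)

lemma abs_div_sqrt_add_le {t₀ t x x₀ : ℝ} (ht₀ : 0 ≤ t₀) (ht : 0 < t) (hx : |x| ≤ x₀) :
    |x / Real.sqrt (t₀ + t)| ≤ x₀ / Real.sqrt t := by
  rw [abs_div, abs_of_nonneg (Real.sqrt_nonneg _)]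
  exact div_le_div₀ ((abs_nonneg x).trans hx) hx (Real.sqrt_pos.2 ht)
    (Real.sqrt_le_sqrt (by linarith))

lemma abs_integral_sub_le_of_lipschitzOnWith {f : ℝ → ℝ} {L : NNReal} {r ξ : ℝ}
    (hf : LipschitzOnWith L f (Icc (-r) r)) (hξ : |ξ| ≤ r) :
    |∫ s in (0:ℝ)..ξ, (f s - f 0)| ≤ L * ξ ^ 2 := by
  have hr : 0 ≤ r := (abs_nonneg ξ).trans hξ
  have h := intervalIntegral.norm_integral_le_of_norm_le_const (a := 0) (b := ξ)
    (f := fun s => f s - f 0) (C := L * |ξ|) fun s hs => by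
      have hs' : |s| ≤ |ξ| := by
        simpa using abs_sub_left_of_mem_uIcc (uIoc_subset_uIcc hs)
      have := hf.dist_le_mul s (abs_le.1 (hs'.trans hξ)) 0 ⟨by linarith, hr⟩
      rw [Real.dist_eq, Real.dist_eq, sub_zero] at this
      exact this.trans (by gcongr)
  simpa [sq_abs, pow_two, mul_assoc] using h

lemma abs_le_mul_exp_neg_sq_div_four {v c : ℝ → ℝ} (hv : ∀ ξ ≤ 0, HasDerivAt v (c ξ * v ξ) ξ)
    (hc : ∀ ξ ≤ 0, -(ξ / 2) ≤ c ξ) {ξ : ℝ} (hξ : ξ ≤ 0) :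
    |v ξ| ≤ |v 0| * exp (-(ξ ^ 2 / 4)) := by
  set w : ℝ → ℝ := fun s => v s ^ 2 * exp (s ^ 2 / 2) with hw_def
  set w' : ℝ → ℝ := fun s => v s ^ 2 * exp (s ^ 2 / 2) * (2 * c s + s)
  have hw : ∀ s ≤ 0, HasDerivAt w (w' s) s := by
    intro s hs
    refine (((hv s hs).fun_pow 2).mul ((hasDerivAt_pow 2 s).div_const 2).exp).congr_deriv ?_
    push_cast; ring
  have hmono : MonotoneOn w (Iic 0) := by
    refine monotoneOn_of_hasDerivWithinAt_nonneg (f' := w') (convex_Iic 0)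
      (fun s hs => (hw s hs).continuousAt.continuousWithinAt) (fun s hs => ?_) (fun s hs => ?_)
    · rw [interior_Iic] at hs; exact (hw s hs.le).hasDerivWithinAt
    · rw [interior_Iic] at hs
      exact mul_nonneg (by positivity) (by linarith [hc s hs.le])
  have hwξ : w ξ ≤ w 0 := hmono hξ (mem_Iic.2 le_rfl) hξ
  refine abs_le_of_sq_le_sq ?_ (by positivity)
  calc v ξ ^ 2 = w ξ * exp (-(ξ ^ 2 / 2)) := by
        rw [hw_def, mul_assoc, ← exp_add]; simp
    _ ≤ w 0 * exp (-(ξ ^ 2 / 2)) := by gcongr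
    _ = (|v 0| * exp (-(ξ ^ 2 / 4))) ^ 2 := by
        rw [hw_def, mul_pow, sq_abs, ← exp_nat_mul, mul_assoc, ← exp_add]
        ring_nf

lemma abs_sub_le_of_abs_deriv_le_exp {f : ℝ → ℝ} {l K a : ℝ} (hf : Differentiable ℝ f)
    (hlim : Tendsto f atBot (nhds l)) (hbound : ∀ s ≤ a, |deriv f s| ≤ K * exp s)
    {ξ : ℝ} (hξ : ξ ≤ a) : |f ξ - l| ≤ K * exp ξ := by
  have hseg : ∀ ζ ≤ ξ, |f ξ - f ζ| ≤ K * exp ξ - K * exp ζ := fun ζ hζ =>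
    image_norm_le_of_norm_deriv_right_le_deriv_boundary (f := fun s => f s - f ζ)
      (B := fun s => K * exp s - K * exp ζ)
      (hf.continuous.sub continuous_const).continuousOn
      (fun s _ => ((hf s).hasDerivAt.sub_const _).hasDerivWithinAt) (by simp)
      (fun s => ((hasDerivAt_exp s).const_mul K).sub_const _)
      (fun s hs => hbound s (hs.2.le.trans hξ)) ⟨hζ, le_rfl⟩
  have hlim' : Tendsto (fun ζ => K * exp ξ - K * exp ζ) atBot (nhds (K * exp ξ)) := by
    simpa using tendsto_const_nhds.sub (tendsto_exp_atBot.const_mul K)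
  exact le_of_tendsto_of_tendsto ((tendsto_const_nhds.sub hlim).abs) hlim'
    (eventually_atBot.2 ⟨ξ, hseg⟩)

lemma integrableOn_Iic_of_abs_le_exp {g : ℝ → ℝ} {K : ℝ} (hg : Continuous g)
    (hbound : ∀ ξ ≤ 0, |g ξ| ≤ K * exp ξ) (a : ℝ) : IntegrableOn g (Iic a) := by
  have h0 : IntegrableOn g (Iic 0) :=
    ((integrableOn_exp_Iic 0).const_mul K).mono' hg.aestronglyMeasurable
      ((ae_restrict_iff' measurableSet_Iic).2 (ae_of_all _ hbound))
  rcases le_total a 0 with h | h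
  · exact h0.mono_set (Iic_subset_Iic.2 h)
  · rw [← Iic_union_Ioc_eq_Iic h]
    exact h0.union hg.integrableOn_Ioc

lemma exists_pos_forall_le_of_tendsto_atBot {f : ℝ → ℝ} {l : ℝ} (hf : Continuous f)
    (hpos : ∀ x, 0 < f x) (hlim : Tendsto f atBot (nhds l)) (hl : 0 < l) (a : ℝ) :
    ∃ m > 0, ∀ x ≤ a, m ≤ f x := by
  obtain ⟨R, hR⟩ := eventually_atBot.1 (hlim.eventually (lt_mem_nhds (half_lt_self hl)))
  obtain ⟨z, -, hz⟩ := isCompact_Icc.exists_isMinOn (s := Icc (min R a) a)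
    ⟨a, min_le_right _ _, le_rfl⟩ hf.continuousOn
  refine ⟨min (l / 2) (f z), lt_min (half_pos hl) (hpos z), fun x hx => ?_⟩
  rcases le_total x (min R a) with h | h
  · exact (min_le_left _ _).trans (hR x (h.trans (min_le_left _ _))).le
  · exact (min_le_right _ _).trans (hz ⟨h, hx⟩)

namespace IsMixingProfile

variable {ηp ηm : ℝ} {e : ℝ → ℝ}

lemma three_mul_sq_lt_one (he : IsMixingProfile ηp ηm e) (ξ : ℝ) : 3 * e ξ ^ 2 < 1 :=
  three_mul_sq_lt_one_of_mem_Ioo (he.2.1 ξ)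

lemma differentiable (he : IsMixingProfile ηp ηm e) : Differentiable ℝ e :=
  he.1.differentiable two_ne_zero

lemma contDiff_deriv (he : IsMixingProfile ηp ηm e) : ContDiff ℝ 1 (deriv e) :=
  (contDiff_succ_iff_deriv (n := 1)).1 he.1 |>.2.2

lemma deriv_AGL_comp (he : IsMixingProfile ηp ηm e) :
    deriv (fun x => AGL (e x)) = fun ξ => aGL (e ξ) * deriv e ξ :=
  funext fun ξ => ((hasDerivAt_AGL_s19 (mem_Ioo_of_three_mul_sq_lt_one (he.three_mul_sq_lt_one ξ))).comp
    ξ (he.differentiable ξ).hasDerivAt).deriv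

lemma abs_deriv_le_exp (he : IsMixingProfile ηp ηm e) (hm : 3 * ηm ^ 2 < 1) :
    ∃ K, ∀ ξ ≤ 0, |deriv e ξ| ≤ K * exp ξ := by
  set v : ℝ → ℝ := fun ξ => aGL (e ξ) * deriv e ξ
  have hmem ξ := mem_Ioo_of_three_mul_sq_lt_one (he.three_mul_sq_lt_one ξ)
  have hapos ξ : 0 < aGL (e ξ) := aGL_pos_s19 (he.three_mul_sq_lt_one ξ)
  have hv ξ : HasDerivAt v (-(ξ / 2) / aGL (e ξ) * v ξ) ξ := by
    have hode := he.2.2.1 ξ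
    rw [he.deriv_AGL_comp] at hode
    have hdiff : DifferentiableAt ℝ v ξ := ((differentiableAt_aGL_s19 (hmem ξ)).comp ξ
      (he.differentiable ξ)).mul ((he.contDiff_deriv.differentiable one_ne_zero) ξ)
    refine hdiff.hasDerivAt.congr_deriv ?_
    change deriv (fun ξ => aGL (e ξ) * deriv e ξ) ξ = _
    rw [eq_neg_of_add_eq_zero_left hode]
    field_simp [v, (hapos ξ).ne']
    ring
  have hc : ∀ ξ ≤ 0, -(ξ / 2) ≤ -(ξ / 2) / aGL (e ξ) := fun ξ hξ =>
    le_div_self (by linarith) (hapos ξ) (aGL_le_one (by nlinarith [he.three_mul_sq_lt_one ξ]))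
  have hcont : Continuous fun ξ => aGL (e ξ) :=
    continuousOn_aGL.comp_continuous he.1.continuous hmem
  have hlim : Tendsto (fun ξ => aGL (e ξ)) atBot (nhds (aGL ηm)) :=
    (continuousOn_aGL.continuousAt (isOpen_Ioo.mem_nhds
      (mem_Ioo_of_three_mul_sq_lt_one hm))).tendsto.comp he.2.2.2.2
  obtain ⟨m, hm0, hmle⟩ := exists_pos_forall_le_of_tendsto_atBot hcont hapos hlim (aGL_pos_s19 hm) 0
  refine ⟨|v 0| * exp 1 / m, fun ξ hξ => ?_⟩
  calc |deriv e ξ| = |v ξ| / aGL (e ξ) := by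
        rw [abs_mul, abs_of_pos (hapos ξ), mul_div_cancel_left₀ _ (hapos ξ).ne']
    _ ≤ |v 0| * exp (-(ξ ^ 2 / 4)) / m :=
        div_le_div₀ (by positivity) (abs_le_mul_exp_neg_sq_div_four (fun ξ _ => hv ξ) hc hξ)
          hm0 (hmle ξ hξ)
    _ ≤ |v 0| * exp (1 + ξ) / m := by gcongr; nlinarith [sq_nonneg (ξ + 2)]
    _ = |v 0| * exp 1 / m * exp ξ := by rw [exp_add]; ring

lemma integrableOn_sub (he : IsMixingProfile ηp ηm e) (hm : 3 * ηm ^ 2 < 1) (a : ℝ) :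
    IntegrableOn (fun s => e s - ηm) (Iic a) := by
  obtain ⟨K, hK⟩ := he.abs_deriv_le_exp hm
  exact integrableOn_Iic_of_abs_le_exp (he.1.continuous.sub continuous_const)
    (fun ξ hξ => abs_sub_le_of_abs_deriv_le_exp he.differentiable he.2.2.2.2 hK hξ) a

lemma NGL_eq_add_integral (he : IsMixingProfile ηp ηm e) (hm : 3 * ηm ^ 2 < 1) (ξ : ℝ) :
    NGL e ηm ξ = NGL e ηm 0 + e 0 * ξ + ∫ s in (0:ℝ)..ξ, (e s - e 0) := by
  have h := intervalIntegral.integral_Iic_sub_Iic (he.integrableOn_sub hm 0)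
    (he.integrableOn_sub hm ξ)
  have hsplit : ∫ s in (0:ℝ)..ξ, (e s - ηm) = (∫ s in (0:ℝ)..ξ, (e s - e 0)) + (e 0 - ηm) * ξ := by
    have hi := he.1.continuous.intervalIntegrable (μ := volume) 0 ξ
    rw [intervalIntegral.integral_sub hi (intervalIntegrable_const (μ := volume)),
      intervalIntegral.integral_sub hi (intervalIntegrable_const (μ := volume)),
      intervalIntegral.integral_const, intervalIntegral.integral_const, smul_eq_mul, smul_eq_mul]
    ring
  simp only [NGL]
  linarith

lemma abs_phase_sub_le (he : IsMixingProfile ηp ηm e) (hm : 3 * ηm ^ 2 < 1) {L : NNReal}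
    {t₀ t x x₀ : ℝ} (hL : LipschitzOnWith L e (Icc (-x₀) x₀)) (ht₀ : 0 ≤ t₀) (ht : 1 ≤ t)
    (hx : |x| ≤ x₀) :
    |Real.sqrt (t₀ + t) * NGL e ηm (x / Real.sqrt (t₀ + t))
        - (Real.sqrt t * NGL e ηm 0 + e 0 * x)|
      ≤ (t₀ * |NGL e ηm 0| + L * x₀ ^ 2) / Real.sqrt t := by
  set T := t₀ + t
  set ξ := x / Real.sqrt T
  have hT : 0 < Real.sqrt T := Real.sqrt_pos.2 (by linarith)
  have hξx : Real.sqrt T * ξ = x := mul_div_cancel₀ _ hT.ne'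
  have hξ : |ξ| ≤ x₀ / Real.sqrt t := abs_div_sqrt_add_le ht₀ (by linarith) hx
  have hξ₀ : |ξ| ≤ x₀ :=
    hξ.trans (div_le_self ((abs_nonneg x).trans hx) (Real.one_le_sqrt.2 ht))
  have hsqrt : |Real.sqrt T - Real.sqrt t| ≤ t₀ / Real.sqrt t := by
    simpa [T, abs_of_nonneg ht₀] using abs_sqrt_sub_sqrt_le (a := T) (b := t) (by positivity)
      (by linarith)
  have hrem : Real.sqrt T * |∫ s in (0:ℝ)..ξ, (e s - e 0)| ≤ L * x₀ ^ 2 / Real.sqrt t :=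
    calc Real.sqrt T * |∫ s in (0:ℝ)..ξ, (e s - e 0)| ≤ Real.sqrt T * (L * ξ ^ 2) := by
          gcongr; exact abs_integral_sub_le_of_lipschitzOnWith hL hξ₀
      _ = L * |Real.sqrt T * ξ| * |ξ| := by rw [abs_mul, abs_of_pos hT, ← sq_abs ξ]; ring
      _ ≤ L * x₀ * (x₀ / Real.sqrt t) := by
          rw [hξx]
          exact mul_le_mul (mul_le_mul_of_nonneg_left hx L.2) hξ (abs_nonneg _)
            (mul_nonneg L.2 ((abs_nonneg x).trans hx))
      _ = L * x₀ ^ 2 / Real.sqrt t := by ring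
  rw [he.NGL_eq_add_integral hm]
  calc _ = |(Real.sqrt T - Real.sqrt t) * NGL e ηm 0
          + Real.sqrt T * ∫ s in (0:ℝ)..ξ, (e s - e 0)| := by rw [← hξx]; ring_nf
    _ ≤ |Real.sqrt T - Real.sqrt t| * |NGL e ηm 0|
          + Real.sqrt T * |∫ s in (0:ℝ)..ξ, (e s - e 0)| :=
        (abs_add_le _ _).trans_eq (by rw [abs_mul, abs_mul, abs_of_pos hT])
    _ ≤ t₀ / Real.sqrt t * |NGL e ηm 0| + L * x₀ ^ 2 / Real.sqrt t := by gcongr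
    _ = (t₀ * |NGL e ηm 0| + L * x₀ ^ 2) / Real.sqrt t := by ring

lemma norm_Utilde_sub_le (he : IsMixingProfile ηp ηm e) (hm : 3 * ηm ^ 2 < 1) {t₀ : ℝ}
    (ht₀ : 0 ≤ t₀) (x₀ : ℝ) :
    ∃ B, ∀ t ≥ (1:ℝ), ∀ x : ℝ, |x| ≤ x₀ →
      ‖Utilde e ηm (t₀ + t) x - ((Real.sqrt (1 - e 0 ^ 2) : ℝ) : ℂ)
          * Complex.exp (Complex.I * ((Real.sqrt t * NGL e ηm 0 + e 0 * x : ℝ) : ℂ))‖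
        ≤ B / Real.sqrt t := by
  obtain ⟨L, hL⟩ := he.1.contDiffOn.exists_lipschitzOnWith two_ne_zero (convex_Icc (-x₀) x₀)
    isCompact_Icc
  have hsq ξ : e ξ ^ 2 < 1 := by nlinarith [he.three_mul_sq_lt_one ξ]
  set M := 2 / Real.sqrt (1 - e 0 ^ 2)
  refine ⟨M * L * x₀ + (t₀ * |NGL e ηm 0| + L * x₀ ^ 2), fun t ht x hx => ?_⟩
  set ξ := x / Real.sqrt (t₀ + t)
  have hξ : |ξ| ≤ x₀ / Real.sqrt t := abs_div_sqrt_add_le ht₀ (by linarith) hx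
  have hξ₀ : |ξ| ≤ x₀ :=
    hξ.trans (div_le_self ((abs_nonneg x).trans hx) (Real.one_le_sqrt.2 ht))
  have hamp : |Real.sqrt (1 - e ξ ^ 2) - Real.sqrt (1 - e 0 ^ 2)| ≤ M * L * x₀ / Real.sqrt t :=
    calc _ ≤ M * |e ξ - e 0| := abs_sqrt_one_sub_sq_sub_le (hsq ξ) (hsq 0)
      _ ≤ M * (L * (x₀ / Real.sqrt t)) := by
          gcongr
          have hx₀ : (0 : ℝ) ∈ Icc (-x₀) x₀ :=
            ⟨by linarith [abs_nonneg ξ], by linarith [abs_nonneg ξ]⟩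
          simpa [Real.dist_eq] using (hL.dist_le_mul ξ (abs_le.1 hξ₀) 0 hx₀).trans
            (by gcongr; simpa [Real.dist_eq] using hξ)
      _ = M * L * x₀ / Real.sqrt t := by ring
  have hunit : |Real.sqrt (1 - e 0 ^ 2)| ≤ 1 := by
    rw [abs_of_nonneg (Real.sqrt_nonneg _)]
    exact Real.sqrt_le_one.2 (by nlinarith)
  calc _ ≤ _ := norm_ofReal_mul_exp_sub_le _ _ _ _ hunit
    _ ≤ M * L * x₀ / Real.sqrt t + (t₀ * |NGL e ηm 0| + L * x₀ ^ 2) / Real.sqrt t :=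
        add_le_add hamp (he.abs_phase_sub_le hm hL ht₀ ht hx)
    _ = _ := by ring

end IsMixingProfile

theorem local_convergence_rotating_wave_general
    (ηp ηm : ℝ)
    (hm : ηm ∈ Set.Ioo (-(1 / Real.sqrt 3)) (1 / Real.sqrt 3))
    (e : ℝ → ℝ) (he : IsMixingProfile ηp ηm e)
    (ηstar φstar : ℝ) (hηstar : ηstar = e 0) (hφstar : φstar = NGL e ηm 0)
    (t₀ : ℝ) (ht₀ : 0 < t₀) (ν : ℝ) (hν : ν ∈ Set.Ioo (0:ℝ) 1)
    (u : ℝ → ℝ → ℂ) (C₀ : ℝ)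
    (hu : ∀ t ≥ (1:ℝ), ∀ x : ℝ,
      ‖u t x - Utilde e ηm (t₀ + t) x‖ ≤ C₀ * t ^ (-(ν / 4))) :
    ∀ x₀ > (0:ℝ), ∃ C > (0:ℝ), ∀ t ≥ (1:ℝ), ∀ x : ℝ, |x| ≤ x₀ →
      ‖u t x - ((Real.sqrt (1 - ηstar ^ 2) : ℝ) : ℂ)
          * Complex.exp (Complex.I
              * ((Real.sqrt t * φstar + ηstar * x : ℝ) : ℂ))‖
        ≤ C * t ^ (-(ν / 4)) := by
  intro x₀ _
  subst hηstar hφstar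
  obtain ⟨B, hB⟩ := he.norm_Utilde_sub_le (three_mul_sq_lt_one_of_mem_Ioo hm) ht₀.le x₀
  refine ⟨max (C₀ + |B|) 1, lt_max_of_lt_right one_pos, fun t ht x hx => ?_⟩
  have hrate : |B| / Real.sqrt t ≤ |B| * t ^ (-(ν / 4)) := by
    rw [div_eq_mul_one_div]
    exact mul_le_mul_of_nonneg_left (one_div_sqrt_le_rpow ht (by linarith [hν.2])) (abs_nonneg B)
  calc _ ≤ ‖u t x - Utilde e ηm (t₀ + t) x‖ + ‖Utilde e ηm (t₀ + t) x
          - ((Real.sqrt (1 - e 0 ^ 2) : ℝ) : ℂ)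
            * Complex.exp (Complex.I * ((Real.sqrt t * NGL e ηm 0 + e 0 * x : ℝ) : ℂ))‖ :=
        norm_sub_le_norm_sub_add_norm_sub _ _ _
    _ ≤ C₀ * t ^ (-(ν / 4)) + |B| / Real.sqrt t :=
        add_le_add (hu t ht x) ((hB t ht x hx).trans (by gcongr; exact le_abs_self B))
    _ ≤ max (C₀ + |B|) 1 * t ^ (-(ν / 4)) := by
        have := Real.rpow_nonneg (zero_le_one.trans ht) (-(ν / 4))
        nlinarith [le_max_left (C₀ + |B|) 1]

/-- Local convergence to a rotating periodic wave (Corollary 4.3). -/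
theorem local_convergence_rotating_wave
    (ηp ηm : ℝ)
    (hp : ηp ∈ Set.Ioo (-(1 / Real.sqrt 3)) (1 / Real.sqrt 3))
    (hm : ηm ∈ Set.Ioo (-(1 / Real.sqrt 3)) (1 / Real.sqrt 3))
    (hne : ηp ≠ ηm)
    (e : ℝ → ℝ) (he : IsMixingProfile ηp ηm e)
    (ηstar φstar : ℝ) (hηstar : ηstar = e 0) (hφstar : φstar = NGL e ηm 0)
    (t₀ : ℝ) (ht₀ : 0 < t₀) (ν : ℝ) (hν : ν ∈ Set.Ioo (0:ℝ) 1)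
    (u : ℝ → ℝ → ℂ) (C₀ : ℝ) (hC₀ : 0 < C₀)
    (hu : ∀ t ≥ (1:ℝ), ∀ x : ℝ,
      ‖u t x - Utilde e ηm (t₀ + t) x‖ ≤ C₀ * t ^ (-(ν / 4))) :
    ∀ x₀ > (0:ℝ), ∃ C > (0:ℝ), ∀ t ≥ (1:ℝ), ∀ x : ℝ, |x| ≤ x₀ →
      ‖u t x - ((Real.sqrt (1 - ηstar ^ 2) : ℝ) : ℂ)
          * Complex.exp (Complex.I
              * ((Real.sqrt t * φstar + ηstar * x : ℝ) : ℂ))‖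
        ≤ C * t ^ (-(ν / 4)) :=
  local_convergence_rotating_wave_general ηp ηm hm e he ηstar φstar hηstar hφstar t₀ ht₀ ν hν u C₀
    hu
end
end
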